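/- For the n-qubit state |φ_N⟩ = (1/√(2^N − 1))[2^{N/2}|1⟩^⊗N − |+⟩^⊗N] with measurements u_k = σ_z (outcome +1 ↔ |0⟩) and v_k = −σ_x (outcome +1 ↔ |−⟩, −1 ↔ |+⟩), the Hardy-type conditions hold: (i) P(∀i: u_i = +1) = 1/(2^N(2^N − 1)) > 0; (ii) P(v_r = +1, u_s = +1) = 0 for all r ≠ s; (iii) P(∀i: v_i = −1) = 0. -/

import Mathlib

/-!
Inner products of product states factor into products of one-qubit inner products.
Hence `⟨0…0|φ_N⟩` only sees the `|+⟩^⊗N` component, with amplitude `-2^{-N/2}/√(2^N − 1)`;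
a product state with `|−⟩` at `r` and `|0⟩` at `s` is orthogonal to both `|1⟩^⊗N` (at `s`)
and `|+⟩^⊗N` (at `r`); and `⟨+…+|φ_N⟩` vanishes because `⟨+|1⟩^N = 2^{-N/2}` is cancelled
by the coefficient `2^{N/2}`.
-/

/-- Computational basis states `|0⟩`, `|1⟩` of a qubit. -/
noncomputable def ket (k : Fin 2) : EuclideanSpace ℂ (Fin 2) :=
  EuclideanSpace.single k 1

/-- `|+⟩ = (|0⟩ + |1⟩)/√2`. -/
noncomputable def ketPlus : EuclideanSpace ℂ (Fin 2) :=
  (((Real.sqrt 2)⁻¹ : ℝ) : ℂ) • (ket 0 + ket 1)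

/-- `|−⟩ = (|0⟩ − |1⟩)/√2`. -/
noncomputable def ketMinus : EuclideanSpace ℂ (Fin 2) :=
  (((Real.sqrt 2)⁻¹ : ℝ) : ℂ) • (ket 0 - ket 1)

/-- The product state `⊗ᵢ f i` of `N` qubits, as an element of `(ℂ²)^⊗N`
modeled by `EuclideanSpace ℂ (Fin N → Fin 2)`. -/
noncomputable def prodN {N : ℕ} (f : Fin N → EuclideanSpace ℂ (Fin 2)) :
    EuclideanSpace ℂ (Fin N → Fin 2) :=
  (WithLp.equiv 2 _).symm (fun x => ∏ i, f i (x i))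

/-- The Hardy/anonymous-veto state
`|φ_N⟩ = (1/√(2^N − 1)) [2^{N/2} |1⟩^{⊗N} − |+⟩^{⊗N}]`. -/
noncomputable def phiN (N : ℕ) : EuclideanSpace ℂ (Fin N → Fin 2) :=
  (((Real.sqrt (2 ^ N - 1))⁻¹ : ℝ) : ℂ) •
    (((Real.sqrt (2 ^ N) : ℝ) : ℂ) • prodN (fun _ => ket 1) - prodN (fun _ => ketPlus))

lemma inner_prodN {N : ℕ} (f g : Fin N → EuclideanSpace ℂ (Fin 2)) :
    (inner ℂ (prodN f) (prodN g) : ℂ) = ∏ i, (inner ℂ (f i) (g i) : ℂ) := by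
  simp only [PiLp.inner_apply, RCLike.inner_apply, prodN, WithLp.equiv_symm_apply, map_prod]
  rw [Finset.prod_univ_sum]
  simp [Finset.prod_mul_distrib]

lemma inner_prodN_const {N : ℕ} (a b : EuclideanSpace ℂ (Fin 2)) :
    (inner ℂ (prodN fun _ : Fin N => a) (prodN fun _ => b) : ℂ) = inner ℂ a b ^ N := by
  rw [inner_prodN, Finset.prod_const, Finset.card_univ, Fintype.card_fin]

lemma inner_prodN_eq_zero {N : ℕ} {f g : Fin N → EuclideanSpace ℂ (Fin 2)} (i : Fin N)
    (h : (inner ℂ (f i) (g i) : ℂ) = 0) : (inner ℂ (prodN f) (prodN g) : ℂ) = 0 := by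
  rw [inner_prodN]
  exact Finset.prod_eq_zero (Finset.mem_univ i) h

@[simp]
lemma norm_ket (k : Fin 2) : ‖ket k‖ = 1 := by
  simp [ket]

lemma inner_ket_self (k : Fin 2) : (inner ℂ (ket k) (ket k) : ℂ) = 1 := by
  simp [ket]

@[simp]
lemma inner_ket_zero_ket_one : (inner ℂ (ket 0) (ket 1) : ℂ) = 0 := by
  simp [ket, EuclideanSpace.inner_single_left]

@[simp]
lemma inner_ket_one_ket_zero : (inner ℂ (ket 1) (ket 0) : ℂ) = 0 := by
  simp [ket, EuclideanSpace.inner_single_left]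

lemma inner_ket_zero_ketPlus : (inner ℂ (ket 0) ketPlus : ℂ) = ((√2)⁻¹ : ℝ) := by
  simp [ketPlus]

lemma inner_ketPlus_ket_one : (inner ℂ ketPlus (ket 1) : ℂ) = ((√2)⁻¹ : ℝ) := by
  simp [ketPlus]

lemma inner_ketPlus_self : (inner ℂ ketPlus ketPlus : ℂ) = 1 := by
  have h : ((√2 : ℝ) : ℂ) ^ 2 = 2 := by norm_cast; simp
  simp only [ketPlus, inner_smul_left, inner_smul_right, inner_add_left, inner_add_right,
    inner_ket_self, inner_ket_zero_ket_one, inner_ket_one_ket_zero, Complex.conj_ofReal]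
  push_cast
  field_simp
  rw [h]
  norm_num

lemma inner_ketMinus_ketPlus : (inner ℂ ketMinus ketPlus : ℂ) = 0 := by
  simp [ketPlus, ketMinus]

lemma inner_phiN {N : ℕ} (b : EuclideanSpace ℂ (Fin N → Fin 2)) :
    (inner ℂ b (phiN N) : ℂ) =
      (((√(2 ^ N - 1))⁻¹ : ℝ) : ℂ) *
        ((√(2 ^ N) : ℝ) * inner ℂ b (prodN fun _ => ket 1) -
          inner ℂ b (prodN fun _ => ketPlus)) := by
  simp only [phiN, inner_smul_right, inner_sub_right]

lemma inner_phiN_eq_zero {N : ℕ} {b : EuclideanSpace ℂ (Fin N → Fin 2)}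
    (hone : (inner ℂ b (prodN fun _ => ket 1) : ℂ) = 0)
    (hplus : (inner ℂ b (prodN fun _ => ketPlus) : ℂ) = 0) :
    (inner ℂ b (phiN N) : ℂ) = 0 := by
  simp [inner_phiN, hone, hplus]

lemma norm_inner_prodN_ket_zero_phiN_sq {N : ℕ} (hN : 1 ≤ N) :
    ‖(inner ℂ (prodN fun _ : Fin N => ket 0) (phiN N) : ℂ)‖ ^ 2 =
      1 / (2 ^ N * (2 ^ N - 1)) := by
  have hone : (inner ℂ (prodN fun _ : Fin N => ket 0) (prodN fun _ => ket 1) : ℂ) = 0 :=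
    inner_prodN_eq_zero ⟨0, hN⟩ inner_ket_zero_ket_one
  have hamp : (inner ℂ (prodN fun _ : Fin N => ket 0) (phiN N) : ℂ) =
      ((-((√(2 ^ N - 1))⁻¹ * (√2)⁻¹ ^ N) : ℝ) : ℂ) := by
    rw [inner_phiN, hone, inner_prodN_const, inner_ket_zero_ketPlus]
    push_cast
    ring
  have hpos : (0 : ℝ) ≤ 2 ^ N - 1 := sub_nonneg.mpr (one_le_pow₀ one_le_two)
  rw [hamp, Complex.norm_real, Real.norm_eq_abs, sq_abs, neg_sq, mul_pow, inv_pow,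
    Real.sq_sqrt hpos, ← pow_mul, mul_comm N, pow_mul, inv_pow, Real.sq_sqrt zero_le_two,
    inv_pow, one_div, mul_inv, mul_comm]

lemma inner_prodN_ketPlus_phiN (N : ℕ) :
    (inner ℂ (prodN fun _ : Fin N => ketPlus) (phiN N) : ℂ) = 0 := by
  have hsqrt : √(2 ^ N : ℝ) = √2 ^ N := by
    rw [← Real.sqrt_sq (by positivity : (0 : ℝ) ≤ √2 ^ N), ← pow_mul, mul_comm, pow_mul,
      Real.sq_sqrt zero_le_two]
  rw [inner_phiN, inner_prodN_const, inner_prodN_const, inner_ketPlus_ket_one,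
    inner_ketPlus_self, one_pow, ← Complex.ofReal_pow, ← Complex.ofReal_mul, hsqrt, ← mul_pow,
    mul_inv_cancel₀ (by positivity), one_pow]
  simp

/-- For the `N`-qubit state `|φ_N⟩` with measurements
`u_k = σ_z` (outcome `+1` ↔ `|0⟩`, i.e. `ket 0`) and `v_k = −σ_x`
(outcome `+1` ↔ `|−⟩`, outcome `−1` ↔ `|+⟩`), the Hardy-type conditions hold:
(i) `P(∀ i : u_i = +1) = 1/(2^N (2^N − 1)) > 0`;
(ii) `P(v_r = +1, u_s = +1) = 0` for all `r ≠ s` (the marginal being computed with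
the remaining parties measured in the computational basis, summing the Born-rule
probabilities over their outcomes);
(iii) `P(∀ i : v_i = −1) = 0`. -/
theorem statement10 (N : ℕ) (hN : 1 ≤ N) :
    (‖(inner ℂ (prodN (fun _ : Fin N => ket 0)) (phiN N) : ℂ)‖ ^ 2 =
        1 / (2 ^ N * (2 ^ N - 1)) ∧
      0 < ‖(inner ℂ (prodN (fun _ : Fin N => ket 0)) (phiN N) : ℂ)‖ ^ 2) ∧
    (∀ r s : Fin N, r ≠ s →
      ∑ x : Fin N → Fin 2,
        (if x r = 0 ∧ x s = 0 then
          ‖(inner ℂ (prodN (fun i : Fin N =>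
              if i = r then ketMinus else if i = s then ket 0 else ket (x i)))
            (phiN N) : ℂ)‖ ^ 2 else 0) = 0) ∧
    ‖(inner ℂ (prodN (fun _ : Fin N => ketPlus)) (phiN N) : ℂ)‖ ^ 2 = 0 := by
  have hprob := norm_inner_prodN_ket_zero_phiN_sq hN
  have hgt : (1 : ℝ) < 2 ^ N := one_lt_pow₀ one_lt_two (by omega)
  refine ⟨⟨hprob, hprob ▸ by bound⟩, fun r s hrs => ?_, by simp [inner_prodN_ketPlus_phiN]⟩
  refine Finset.sum_eq_zero fun x _ => ?_
  have hvanish : (inner ℂ (prodN fun i : Fin N =>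
      if i = r then ketMinus else if i = s then ket 0 else ket (x i)) (phiN N) : ℂ) = 0 :=
    inner_phiN_eq_zero (inner_prodN_eq_zero s (by simp [hrs.symm]))
      (inner_prodN_eq_zero r (by simpa using inner_ketMinus_ketPlus))
  simp [hvanish]
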